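/- arXiv:2307.14118 — 3 statements merged into one kernel-verified Lean document; each statement's English description precedes it below -/
import Mathlib

section
/- Let κ be strongly inaccessible, b : κ → κ increasing (not necessarily strictly) with b(α) an infinite cardinal for all α, and h : κ → κ with 2 ≤ h(α) a cardinal for all α. Let ⟨I_α : α < κ⟩ be an interval partition of κ (pairwise disjoint intervals of ordinals with union κ, where every element of I_α is below every element of I_β whenever α < β) with |I_α| = h(α) for each α, and such that b(ξ) = b(α) = b(α)^{h(α)} (cardinal exponentiation) for all ξ ∈ I_α and all α < κ. Then ED_b ≡ AL_{b,h}, i.e., there are Tukey connections in both directions; in particular d_κ^b(≠^∞) = d_κ^{b,h}(∌^∞) and b_κ^b(≠^∞) = b_κ^{b,h}(∌^∞). -/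
open Cardinal Set

namespace BGBS

/-- `P` holds for almost all `α < κ`, i.e. for all `α` above some `β < κ`. -/
def AlmostAll (κ : Ordinal.{0}) (P : Ordinal.{0} → Prop) : Prop :=
  ∃ β < κ, ∀ α, β < α → α < κ → P α

/-- `P` holds for cofinally many `α < κ`. -/
def Cofinally (κ : Ordinal.{0}) (P : Ordinal.{0} → Prop) : Prop :=
  ∀ β < κ, ∃ α, β < α ∧ α < κ ∧ P α

/-- The set `{α < κ | P α}` is bounded in `κ`. -/
def BoundedIn (κ : Ordinal.{0}) (P : Ordinal.{0} → Prop) : Prop :=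
  ∃ β < κ, ∀ α, α < κ → P α → α < β

/-- An ordinal which is (the initial ordinal of) an infinite cardinal. -/
def IsInfCard (o : Ordinal.{0}) : Prop := o.card.ord = o ∧ ℵ₀ ≤ o.card

/-- An ordinal which is (the initial ordinal of) a cardinal. -/
def IsCardOrd (o : Ordinal.{0}) : Prop := o.card.ord = o

/-- The bounded product space `∏ b`: functions on `κ` with `f α < b α`
(and value `0` outside of `κ`, for definiteness). -/
def prodSet (κ : Ordinal.{0}) (b : Ordinal.{0} → Ordinal.{0}) :
    Set (Ordinal.{0} → Ordinal.{0}) :=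
  {f | ∀ α, (α < κ → f α < b α) ∧ (¬ α < κ → f α = 0)}

/-- `f ≤* g` : `f α ≤ g α` for almost all `α < κ`. -/
def leStar (κ : Ordinal.{0}) (f g : Ordinal.{0} → Ordinal.{0}) : Prop :=
  AlmostAll κ fun α => f α ≤ g α

/-- `f α ≠ g α` for almost all `α < κ` (eventual difference). -/
def neStar (κ : Ordinal.{0}) (f g : Ordinal.{0} → Ordinal.{0}) : Prop :=
  AlmostAll κ fun α => f α ≠ g α

/-- `f =^∞ g` : `f α = g α` for cofinally many `α < κ`. -/
def eqInfty (κ : Ordinal.{0}) (f g : Ordinal.{0} → Ordinal.{0}) : Prop :=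
  Cofinally κ fun α => f α = g α

/-- The set of `(b,h)`-slaloms: `φ α ⊆ b α` and `|φ α| < h α` for `α < κ`
(and `φ α = ∅` outside of `κ`, for definiteness). -/
def slalomSet (κ : Ordinal.{0}) (b h : Ordinal.{0} → Ordinal.{0}) :
    Set (Ordinal.{0} → Set Ordinal.{0}) :=
  {φ | ∀ α, (α < κ → φ α ⊆ Iio (b α) ∧ #(φ α) < Cardinal.lift.{1} (h α).card)
      ∧ (¬ α < κ → φ α = ∅)}

/-- `f ∈* φ` : `f α ∈ φ α` for almost all `α < κ`. -/
def inStar (κ : Ordinal.{0}) (f : Ordinal.{0} → Ordinal.{0})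
    (φ : Ordinal.{0} → Set Ordinal.{0}) : Prop :=
  AlmostAll κ fun α => f α ∈ φ α

/-- `f ∈^∞ φ` : `f α ∈ φ α` for cofinally many `α < κ`. -/
def inInfty (κ : Ordinal.{0}) (f : Ordinal.{0} → Ordinal.{0})
    (φ : Ordinal.{0} → Set Ordinal.{0}) : Prop :=
  Cofinally κ fun α => f α ∈ φ α

/-- `f α ∉ φ α` for almost all `α < κ` (the antilocalisation relation). -/
def notInStar (κ : Ordinal.{0}) (φ : Ordinal.{0} → Set Ordinal.{0})
    (f : Ordinal.{0} → Ordinal.{0}) : Prop :=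
  AlmostAll κ fun α => f α ∉ φ α

/-- The norm of the relational system `⟨Xs, Ys, R⟩`: the least cardinality of a
set `W ⊆ Ys` such that every `x ∈ Xs` is `R`-related to some member of `W`. -/
noncomputable def normOf {X : Type*} {Y : Type*} (Xs : Set X) (Ys : Set Y)
    (R : X → Y → Prop) : Cardinal :=
  sInf { c | ∃ W, W ⊆ Ys ∧ (∀ x ∈ Xs, ∃ y ∈ W, R x y) ∧ c = #W }

/-- A Tukey connection between set-based relational systems. -/
def Tukey {X Y X' Y' : Type*} (Xs : Set X) (Ys : Set Y) (R : X → Y → Prop)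
    (Xs' : Set X') (Ys' : Set Y') (R' : X' → Y' → Prop) : Prop :=
  ∃ (ρm : X → X') (ρp : Y' → Y),
    (∀ x ∈ Xs, ρm x ∈ Xs') ∧ (∀ y' ∈ Ys', ρp y' ∈ Ys) ∧
    ∀ x ∈ Xs, ∀ y' ∈ Ys', R' (ρm x) y' → R x (ρp y')

/-- The dominating number `d_κ^b(≤*)`. -/
noncomputable def dLeq (κ : Ordinal.{0}) (b : Ordinal.{0} → Ordinal.{0}) : Cardinal.{1} :=
  normOf (prodSet κ b) (prodSet κ b) (leStar κ)

/-- The unbounding number `b_κ^b(≤*)`. -/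
noncomputable def bLeq (κ : Ordinal.{0}) (b : Ordinal.{0} → Ordinal.{0}) : Cardinal.{1} :=
  normOf (prodSet κ b) (prodSet κ b) fun g f => ¬ leStar κ f g

/-- The eventual difference number `d_κ^b(≠^∞)`. -/
noncomputable def dNeq (κ : Ordinal.{0}) (b : Ordinal.{0} → Ordinal.{0}) : Cardinal.{1} :=
  normOf (prodSet κ b) (prodSet κ b) (neStar κ)

/-- The cofinal equality number `b_κ^b(≠^∞)`. -/
noncomputable def bNeq (κ : Ordinal.{0}) (b : Ordinal.{0} → Ordinal.{0}) : Cardinal.{1} :=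
  normOf (prodSet κ b) (prodSet κ b) fun g f => eqInfty κ g f

/-- The localisation number `d_κ^{b,h}(∈*)`. -/
noncomputable def dLoc (κ : Ordinal.{0}) (b h : Ordinal.{0} → Ordinal.{0}) : Cardinal.{1} :=
  normOf (prodSet κ b) (slalomSet κ b h) (inStar κ)

/-- The avoidance number `b_κ^{b,h}(∈*)`. -/
noncomputable def bLoc (κ : Ordinal.{0}) (b h : Ordinal.{0} → Ordinal.{0}) : Cardinal.{1} :=
  normOf (slalomSet κ b h) (prodSet κ b) fun φ f => ¬ inStar κ f φ

/-- The anti-avoidance number `d_κ^{b,h}(∌^∞)`. -/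
noncomputable def dAntiLoc (κ : Ordinal.{0}) (b h : Ordinal.{0} → Ordinal.{0}) : Cardinal.{1} :=
  normOf (slalomSet κ b h) (prodSet κ b) (notInStar κ)

/-- The antilocalisation number `b_κ^{b,h}(∌^∞)`. -/
noncomputable def bAntiLoc (κ : Ordinal.{0}) (b h : Ordinal.{0} → Ordinal.{0}) : Cardinal.{1} :=
  normOf (prodSet κ b) (slalomSet κ b h) (inInfty κ)

/-- `b` is increasing (below `κ`). -/
def IncreasingOn (κ : Ordinal.{0}) (b : Ordinal.{0} → Ordinal.{0}) : Prop :=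
  ∀ α β, α ≤ β → β < κ → b α ≤ b β

/-- `f` is continuous at every limit ordinal of `A` (below `κ`). -/
def ContinuousOn (κ : Ordinal.{0}) (f : Ordinal.{0} → Ordinal.{0}) (A : Set Ordinal.{0}) : Prop :=
  ∀ γ ∈ A, γ < κ → Order.IsSuccLimit γ → f γ = sSup (f '' Iio γ)

/-- `f` is discontinuous at every limit ordinal of `A` (below `κ`). -/
def DiscontinuousOn (κ : Ordinal.{0}) (f : Ordinal.{0} → Ordinal.{0}) (A : Set Ordinal.{0}) : Prop :=
  ∀ γ ∈ A, γ < κ → Order.IsSuccLimit γ → sSup (f '' Iio γ) < f γ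

/-- `C` is club in `κ`: unbounded, and containing the supremum of each of its
bounded nonempty subsets without a maximum. -/
def IsClubIn (C : Set Ordinal.{0}) (κ : Ordinal.{0}) : Prop :=
  C ⊆ Iio κ ∧ (∀ β < κ, ∃ α ∈ C, β < α) ∧
    ∀ S, S ⊆ C → S.Nonempty → (∃ β < κ, ∀ x ∈ S, x ≤ β) → sSup S ∉ S → sSup S ∈ C

/-- `S` is stationary in `κ`: it meets every club subset of `κ`. -/
def IsStationaryIn (S : Set Ordinal.{0}) (κ : Ordinal.{0}) : Prop :=
  S ⊆ Iio κ ∧ ∀ C, IsClubIn C κ → (S ∩ C).Nonempty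

/-- An almost disjoint family in `∏ b`. -/
def AlmostDisjointFamily (κ : Ordinal.{0}) (b : Ordinal.{0} → Ordinal.{0})
    (A : Set (Ordinal.{0} → Ordinal.{0})) : Prop :=
  A ⊆ prodSet κ b ∧ ∀ f ∈ A, ∀ g ∈ A, f ≠ g → AlmostAll κ fun α => f α ≠ g α

lemma not_almostAll (κ : Ordinal.{0}) (P : Ordinal.{0} → Prop) :
    ¬ AlmostAll κ P ↔ Cofinally κ fun α => ¬ P α := by
  unfold AlmostAll Cofinally
  push_neg
  rfl

lemma cofinally_congr {κ : Ordinal.{0}} {P Q : Ordinal.{0} → Prop}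
    (hPQ : ∀ α, P α ↔ Q α) : Cofinally κ P ↔ Cofinally κ Q := by
  unfold Cofinally
  constructor <;> intro hc β hβ <;> obtain ⟨α, h1, h2, h3⟩ := hc β hβ
  · exact ⟨α, h1, h2, (hPQ α).mp h3⟩
  · exact ⟨α, h1, h2, (hPQ α).mpr h3⟩

lemma eqInfty_iff (κ : Ordinal.{0}) (g f : Ordinal.{0} → Ordinal.{0}) :
    eqInfty κ g f ↔ ¬ neStar κ f g := by
  rw [neStar, not_almostAll, eqInfty]
  exact cofinally_congr fun α =>
    ⟨fun hgf hne => hne hgf.symm, fun hnn => (not_not.mp hnn).symm⟩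

lemma inInfty_iff (κ : Ordinal.{0}) (f : Ordinal.{0} → Ordinal.{0})
    (φ : Ordinal.{0} → Set Ordinal.{0}) :
    inInfty κ f φ ↔ ¬ notInStar κ φ f := by
  rw [notInStar, not_almostAll, inInfty]
  exact cofinally_congr fun α => (not_not).symm

lemma normOf_congr {X Y : Type*} (Xs : Set X) (Ys : Set Y) {R R' : X → Y → Prop}
    (hRR : ∀ x ∈ Xs, ∀ y ∈ Ys, (R x y ↔ R' x y)) :
    normOf Xs Ys R = normOf Xs Ys R' := by
  unfold normOf
  congr 1
  ext c
  constructor <;> rintro ⟨W, hW, hcov, rfl⟩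
  · exact ⟨W, hW, fun x hx => (hcov x hx).imp
      (fun y hy => ⟨hy.1, (hRR x hx y (hW hy.1)).mp hy.2⟩), rfl⟩
  · exact ⟨W, hW, fun x hx => (hcov x hx).imp
      (fun y hy => ⟨hy.1, (hRR x hx y (hW hy.1)).mpr hy.2⟩), rfl⟩

lemma tukey_dual {X Y X' Y' : Type*} {Xs : Set X} {Ys : Set Y} {R : X → Y → Prop}
    {Xs' : Set X'} {Ys' : Set Y'} {R' : X' → Y' → Prop}
    (t : Tukey Xs Ys R Xs' Ys' R') :
    Tukey Ys' Xs' (fun y' x' => ¬ R' x' y') Ys Xs (fun y x => ¬ R x y) := by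
  obtain ⟨ρm, ρp, h1, h2, h3⟩ := t
  exact ⟨ρp, ρm, h2, h1, fun y' hy' x hx hnr hr => hnr (h3 x hx y' hy' hr)⟩

lemma tukey_witness {X X' : Type*} {Y Y' : Type v}
    {Xs : Set X} {Ys : Set Y} {R : X → Y → Prop}
    {Xs' : Set X'} {Ys' : Set Y'} {R' : X' → Y' → Prop}
    (t : Tukey Xs Ys R Xs' Ys' R') {W' : Set Y'} (hW' : W' ⊆ Ys')
    (hcov : ∀ x ∈ Xs', ∃ y ∈ W', R' x y) :
    ∃ W : Set Y, W ⊆ Ys ∧ (∀ x ∈ Xs, ∃ y ∈ W, R x y) ∧ #W ≤ #W' := by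
  obtain ⟨ρm, ρp, h1, h2, h3⟩ := t
  refine ⟨ρp '' W', ?_, ?_, Cardinal.mk_image_le⟩
  · rintro y ⟨y', hy', rfl⟩; exact h2 y' (hW' hy')
  · intro x hx
    obtain ⟨y', hy', hr⟩ := hcov (ρm x) (h1 x hx)
    exact ⟨ρp y', ⟨y', hy', rfl⟩, h3 x hx y' (hW' hy') hr⟩

lemma normOf_le_of_tukey {X X' : Type*} {Y Y' : Type v}
    {Xs : Set X} {Ys : Set Y} {R : X → Y → Prop}
    {Xs' : Set X'} {Ys' : Set Y'} {R' : X' → Y' → Prop}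
    (t : Tukey Xs Ys R Xs' Ys' R') :
    ∀ c ∈ {c | ∃ W, W ⊆ Ys' ∧ (∀ x ∈ Xs', ∃ y ∈ W, R' x y) ∧ c = #W},
      normOf Xs Ys R ≤ c := by
  intro c hc
  obtain ⟨W', hW', hcov, rfl⟩ := hc
  obtain ⟨W, h1, h2, h3⟩ := tukey_witness t hW' hcov
  exact le_trans (csInf_le' ⟨W, h1, h2, rfl⟩) h3

lemma normOf_eq_of_tukey {X X' : Type*} {Y Y' : Type v}
    {Xs : Set X} {Ys : Set Y} {R : X → Y → Prop}
    {Xs' : Set X'} {Ys' : Set Y'} {R' : X' → Y' → Prop}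
    (t : Tukey Xs Ys R Xs' Ys' R') (t' : Tukey Xs' Ys' R' Xs Ys R) :
    normOf Xs Ys R = normOf Xs' Ys' R' := by
  by_cases hne : {c | ∃ W, W ⊆ Ys' ∧ (∀ x ∈ Xs', ∃ y ∈ W, R' x y) ∧ c = #W}.Nonempty
  · have hne2 : {c | ∃ W, W ⊆ Ys ∧ (∀ x ∈ Xs, ∃ y ∈ W, R x y) ∧ c = #W}.Nonempty := by
      obtain ⟨c, W', hW', hcov, rfl⟩ := hne
      obtain ⟨W, h1, h2, _⟩ := tukey_witness t hW' hcov
      exact ⟨#W, W, h1, h2, rfl⟩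
    exact le_antisymm (le_csInf hne fun c hc => normOf_le_of_tukey t c hc)
      (le_csInf hne2 fun c hc => normOf_le_of_tukey t' c hc)
  · have hne2 : ¬ {c | ∃ W, W ⊆ Ys ∧ (∀ x ∈ Xs, ∃ y ∈ W, R x y) ∧ c = #W}.Nonempty := by
      intro h2
      obtain ⟨c, W', hW', hcov, rfl⟩ := h2
      obtain ⟨W, h1, h2', _⟩ := tukey_witness t' hW' hcov
      exact hne ⟨#W, W, h1, h2', rfl⟩
    unfold normOf
    rw [Set.not_nonempty_iff_eq_empty.mp hne, Set.not_nonempty_iff_eq_empty.mp hne2]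

/-- If `⟨I_α : α < κ⟩` is an interval partition of `κ` with `|I_α| = h α` and
`b ξ = b α = (b α)^(h α)` for all `ξ ∈ I_α`, then `ED_b ≡ AL_{b,h}`;
in particular `d_κ^b(≠^∞) = d_κ^{b,h}(∌^∞)` and `b_κ^b(≠^∞) = b_κ^{b,h}(∌^∞)`. -/
theorem stmt13 (κ : Cardinal.{0}) (hκ : κ.IsInaccessible)
    (b h : Ordinal.{0} → Ordinal.{0})
    (hbinc : IncreasingOn κ.ord b)
    (hb : ∀ α < κ.ord, b α < κ.ord ∧ IsInfCard (b α))
    (hh : ∀ α < κ.ord, IsCardOrd (h α) ∧ 2 ≤ h α)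
    (I : Ordinal.{0} → Set Ordinal.{0})
    (hIdisj : ∀ α < κ.ord, ∀ β < κ.ord, α ≠ β → Disjoint (I α) (I β))
    (hIunion : (⋃ α ∈ Iio κ.ord, I α) = Iio κ.ord)
    (hIint : ∀ α < κ.ord, ∀ x ∈ I α, ∀ z ∈ I α, ∀ y, x ≤ y → y ≤ z → y ∈ I α)
    (hIord : ∀ α < κ.ord, ∀ β < κ.ord, α < β → ∀ x ∈ I α, ∀ y ∈ I β, x < y)
    (hIcard : ∀ α < κ.ord, #(I α) = Cardinal.lift.{1} (h α).card)
    (hbI : ∀ α < κ.ord, ∀ ξ ∈ I α, b ξ = b α)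
    (hbexp : ∀ α < κ.ord, (b α).card ^ (h α).card = (b α).card) :
    Tukey (prodSet κ.ord b) (prodSet κ.ord b) (neStar κ.ord)
      (slalomSet κ.ord b h) (prodSet κ.ord b) (notInStar κ.ord) ∧
    Tukey (slalomSet κ.ord b h) (prodSet κ.ord b) (notInStar κ.ord)
      (prodSet κ.ord b) (prodSet κ.ord b) (neStar κ.ord) ∧
    dNeq κ.ord b = dAntiLoc κ.ord b h ∧
    bNeq κ.ord b = bAntiLoc κ.ord b h := by
  classical
  -- basic facts
  have hbpos : ∀ α, α < κ.ord → (0 : Ordinal) < b α := by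
    intro α hα
    rw [pos_iff_ne_zero]
    intro h0
    have := (hb α hα).2.2
    rw [h0] at this
    simp at this
    exact Cardinal.aleph0_ne_zero this
  have hIsub : ∀ α, α < κ.ord → I α ⊆ Iio κ.ord := by
    intro α hα
    rw [← hIunion]
    exact Set.subset_biUnion_of_mem hα
  have hmemI : ∀ ξ, ξ < κ.ord → ∃ α, α < κ.ord ∧ ξ ∈ I α := by
    intro ξ hξ
    have : ξ ∈ ⋃ α ∈ Iio κ.ord, I α := by rw [hIunion]; exact hξ
    simpa using this
  choose idx hidx1 hidx2 using hmemI
  have hidxu : ∀ ξ (hξ : ξ < κ.ord) (α : Ordinal), α < κ.ord → ξ ∈ I α → idx ξ hξ = α := by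
    intro ξ hξ α hα hm
    by_contra hne
    exact Set.disjoint_left.mp (hIdisj _ (hidx1 ξ hξ) _ hα hne) (hidx2 ξ hξ) hm
  have hIne : ∀ α, α < κ.ord → Nonempty (↥(I α)) := by
    intro α hα
    rw [← Cardinal.mk_ne_zero_iff, hIcard α hα]
    simp only [ne_eq, Cardinal.lift_eq_zero, Cardinal.mk_ne_zero_iff]
    intro h0
    have h2 : (2 : Ordinal) ≤ h α := (hh α hα).2
    have : (2 : Ordinal).card ≤ (h α).card := Ordinal.card_le_card h2
    rw [h0] at this
    simp [Ordinal.card_ofNat] at this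
  -- the coding injections
  have hembE : ∀ α, α < κ.ord → Nonempty ((↥(I α) → ↥(Iio (b α))) ↪ ↥(Iio (b α))) := by
    intro α hα
    rw [← Cardinal.le_def]
    have e1 : #(↥(I α) → ↥(Iio (b α))) = #(↥(Iio (b α))) ^ #(↥(I α)) :=
      (Cardinal.power_def _ _).symm
    rw [e1, hIcard α hα, Ordinal.mk_Iio_ordinal, ← Cardinal.lift_power, hbexp α hα]
  have emb : ∀ α, α < κ.ord → ((↥(I α) → ↥(Iio (b α))) ↪ ↥(Iio (b α))) :=
    fun α hα => (hembE α hα).some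
  have hdecE : ∀ α (hα : α < κ.ord),
      ∃ d : ↥(Iio (b α)) → (↥(I α) → ↥(Iio (b α))), ∀ u, d (emb α hα u) = u := by
    intro α hα
    haveI : Nonempty (↥(Iio (b α))) := ⟨⟨0, hbpos α hα⟩⟩
    exact ⟨Function.invFun (emb α hα),
      fun u => Function.leftInverse_invFun (emb α hα).injective u⟩
  choose dec hdec using hdecE
  have hJE : ∀ α (hα : α < κ.ord) (s : Set Ordinal.{0}),
      ∃ j : ↥s → ↥(I α),
        #s < Cardinal.lift.{1} (h α).card → Function.Injective j := by
    intro α hα s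
    by_cases hs : #s < Cardinal.lift.{1} (h α).card
    · have hle : #s ≤ #(↥(I α)) := by rw [hIcard α hα]; exact hs.le
      obtain ⟨e⟩ := (Cardinal.le_def _ _).mp hle
      exact ⟨e, fun _ => e.injective⟩
    · haveI := hIne α hα
      exact ⟨fun _ => Classical.arbitrary _, fun hcard => absurd hcard hs⟩
  choose J hJinj using hJE
  -- the maps
  set rm2 : (Ordinal.{0} → Set Ordinal.{0}) → Ordinal.{0} → Ordinal.{0} := fun φ ξ =>
    if hξ : ξ < κ.ord then
      (if hc : ∃ c : ↥(φ (idx ξ hξ)),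
          ((J (idx ξ hξ) (hidx1 ξ hξ) (φ (idx ξ hξ)) c : ↥(I (idx ξ hξ))) : Ordinal) = ξ then
        (if hcb : (hc.choose : Ordinal) < b (idx ξ hξ) then
          ((dec (idx ξ hξ) (hidx1 ξ hξ) ⟨(hc.choose : Ordinal), hcb⟩
            ⟨ξ, hidx2 ξ hξ⟩ : ↥(Iio (b (idx ξ hξ)))) : Ordinal)
        else 0)
      else 0)
    else 0 with hrm2
  set restr : (Ordinal.{0} → Ordinal.{0}) → ∀ α, α < κ.ord → ↥(I α) → ↥(Iio (b α)) :=
    fun g α hα ξ => if hgb : g ξ.1 < b α then ⟨g ξ.1, hgb⟩ else ⟨0, hbpos α hα⟩ with hrestr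
  set rp2 : (Ordinal.{0} → Ordinal.{0}) → Ordinal.{0} → Ordinal.{0} := fun g α =>
    if hα : α < κ.ord then ((emb α hα (restr g α hα) : ↥(Iio (b α))) : Ordinal) else 0
    with hrp2
  -- computation lemma for rm2
  have comp : ∀ (ζ : Ordinal) (hζK : ζ < κ.ord) (φ : Ordinal.{0} → Set Ordinal.{0})
      (c : Ordinal) (hc' : c ∈ φ (idx ζ hζK)) (hcb : c < b (idx ζ hζK))
      (hscard : #(φ (idx ζ hζK)) < Cardinal.lift.{1} (h (idx ζ hζK)).card)
      (hJζ : ((J (idx ζ hζK) (hidx1 ζ hζK) (φ (idx ζ hζK)) ⟨c, hc'⟩ :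
          ↥(I (idx ζ hζK))) : Ordinal) = ζ),
      rm2 φ ζ = ((dec (idx ζ hζK) (hidx1 ζ hζK) ⟨c, hcb⟩
        ⟨ζ, hidx2 ζ hζK⟩ : ↥(Iio (b (idx ζ hζK)))) : Ordinal) := by
    intro ζ hζK φ c hc' hcb hscard hJζ
    simp only [hrm2]
    rw [dif_pos hζK]
    have hex : ∃ c' : ↥(φ (idx ζ hζK)),
        ((J (idx ζ hζK) (hidx1 ζ hζK) (φ (idx ζ hζK)) c' : ↥(I (idx ζ hζK))) : Ordinal) = ζ :=
      ⟨⟨c, hc'⟩, hJζ⟩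
    rw [dif_pos hex]
    have hinj : Function.Injective (J (idx ζ hζK) (hidx1 ζ hζK) (φ (idx ζ hζK))) :=
      hJinj _ _ _ hscard
    have hch : hex.choose = (⟨c, hc'⟩ : ↥(φ (idx ζ hζK))) :=
      hinj (Subtype.ext (hex.choose_spec.trans hJζ.symm))
    rw [hch]
    rw [dif_pos (show ((⟨c, hc'⟩ : ↥(φ (idx ζ hζK))) : Ordinal) < b (idx ζ hζK) from hcb)]
  -- rm2 maps slaloms into the product
  have hrm2mem : ∀ φ ∈ slalomSet κ.ord b h, rm2 φ ∈ prodSet κ.ord b := by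
    intro φ hφ ξ
    constructor
    · intro hξ
      simp only [hrm2]
      rw [dif_pos hξ]
      have hbb : b ξ = b (idx ξ hξ) := hbI (idx ξ hξ) (hidx1 ξ hξ) ξ (hidx2 ξ hξ)
      split
      · split
        · rw [hbb]; exact (dec _ _ _ _).2
        · rw [hbb]; exact hbpos _ (hidx1 ξ hξ)
      · rw [hbb]; exact hbpos _ (hidx1 ξ hξ)
    · intro hξ
      simp only [hrm2]
      rw [dif_neg hξ]
  -- rp2 maps the product into the product
  have hrp2mem : ∀ g, rp2 g ∈ prodSet κ.ord b := by
    intro g α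
    constructor
    · intro hα
      simp only [hrp2]
      rw [dif_pos hα]
      exact (emb α hα (restr g α hα)).2
    · intro hα
      simp only [hrp2]
      rw [dif_neg hα]
  -- the nontrivial Tukey connection
  have T2 : Tukey (slalomSet κ.ord b h) (prodSet κ.ord b) (notInStar κ.ord)
      (prodSet κ.ord b) (prodSet κ.ord b) (neStar κ.ord) := by
    refine ⟨rm2, rp2, hrm2mem, fun g _ => hrp2mem g, ?_⟩
    rintro φ hφ g hg ⟨β, hβ, hne⟩
    refine ⟨idx β hβ, hidx1 β hβ, fun α hα1 hα2 hmem => ?_⟩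
    obtain ⟨c, hceq⟩ : ∃ c, rp2 g α = c := ⟨_, rfl⟩
    rw [hceq] at hmem
    obtain ⟨ζ, hζI, hJζα⟩ : ∃ ζ, ζ ∈ I α ∧
        ((J α hα2 (φ α) ⟨c, hmem⟩ : ↥(I α)) : Ordinal) = ζ :=
      ⟨_, (J α hα2 (φ α) ⟨c, hmem⟩).2, rfl⟩
    have hζK : ζ < κ.ord := hIsub α hα2 hζI
    have hβζ : β < ζ := hIord _ (hidx1 β hβ) α hα2 hα1 β (hidx2 β hβ) ζ hζI
    have hidxeq : idx ζ hζK = α := hidxu ζ hζK α hα2 hζI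
    subst hidxeq
    have hcb : c < b (idx ζ hζK) := ((hφ (idx ζ hζK)).1 hα2).1 hmem
    have hscard : #(φ (idx ζ hζK)) < Cardinal.lift.{1} (h (idx ζ hζK)).card :=
      ((hφ (idx ζ hζK)).1 hα2).2
    have hcomp := comp ζ hζK φ c hmem hcb hscard hJζα
    refine hne ζ hβζ hζK (hcomp.trans ?_)
    have hval : c = ((emb (idx ζ hζK) hα2 (restr g (idx ζ hζK) hα2) :
        ↥(Iio (b (idx ζ hζK)))) : Ordinal) := by
      rw [← hceq]
      simp only [hrp2]
      rw [dif_pos hα2]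
    have hsub : (⟨c, hcb⟩ : ↥(Iio (b (idx ζ hζK)))) = emb (idx ζ hζK) hα2
        (restr g (idx ζ hζK) hα2) := Subtype.ext hval
    rw [hsub]
    have h6 : ((dec (idx ζ hζK) (hidx1 ζ hζK)
        (emb (idx ζ hζK) hα2 (restr g (idx ζ hζK) hα2)) ⟨ζ, hidx2 ζ hζK⟩ :
          ↥(Iio (b (idx ζ hζK)))) : Ordinal)
        = ((restr g (idx ζ hζK) hα2 ⟨ζ, hidx2 ζ hζK⟩ : ↥(Iio (b (idx ζ hζK)))) : Ordinal) :=
      congrArg Subtype.val (congrFun (hdec (idx ζ hζK) hα2 (restr g (idx ζ hζK) hα2))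
        ⟨ζ, hidx2 ζ hζK⟩)
    rw [h6]
    simp only [hrestr]
    have hgb : g ζ < b (idx ζ hζK) := by
      rw [← hbI (idx ζ hζK) hα2 ζ hζI]
      exact (hg ζ).1 hζK
    rw [dif_pos hgb]
  -- the easy Tukey connection
  set sing : (Ordinal.{0} → Ordinal.{0}) → Ordinal.{0} → Set Ordinal.{0} :=
    fun f α => if α < κ.ord then {f α} else ∅ with hsing
  have T1 : Tukey (prodSet κ.ord b) (prodSet κ.ord b) (neStar κ.ord)
      (slalomSet κ.ord b h) (prodSet κ.ord b) (notInStar κ.ord) := by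
    refine ⟨sing, id, ?_, fun g hg => hg, ?_⟩
    · intro f hf α
      constructor
      · intro hα
        simp only [hsing]
        rw [if_pos hα]
        constructor
        · rw [Set.singleton_subset_iff]
          exact (hf α).1 hα
        · rw [Cardinal.mk_singleton]
          have h2 : (2 : Ordinal) ≤ h α := (hh α hα).2
          have h2c : (2 : Cardinal) ≤ (h α).card := by
            have := Ordinal.card_le_card h2
            rwa [Ordinal.card_ofNat] at this
          have : (2 : Cardinal.{1}) ≤ Cardinal.lift.{1} (h α).card := by
            rw [show (2 : Cardinal.{1}) = Cardinal.lift.{1} (2 : Cardinal.{0}) by simp]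
            exact Cardinal.lift_le.mpr h2c
          exact lt_of_lt_of_le one_lt_two this
      · intro hα
        simp only [hsing]
        rw [if_neg hα]
    · rintro f hf g hg ⟨β, hβ, hni⟩
      refine ⟨β, hβ, fun α hα1 hα2 => ?_⟩
      have := hni α hα1 hα2
      simp only [hsing] at this
      rw [if_pos hα2] at this
      intro heq
      exact this (Set.mem_singleton_iff.mpr heq.symm)
  -- conclusions
  refine ⟨T1, T2, normOf_eq_of_tukey T1 T2, ?_⟩
  have D2 := tukey_dual T2
  have D1 := tukey_dual T1
  have hmain := normOf_eq_of_tukey D2 D1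
  unfold bNeq bAntiLoc
  refine Eq.trans (normOf_congr _ _ ?_) (Eq.trans hmain (normOf_congr _ _ ?_).symm)
  · intro g _ f _
    exact eqInfty_iff κ.ord g f
  · intro f _ φ _
    exact inInfty_iff κ.ord f φ

end BGBS
end

section
/- Let κ be strongly inaccessible. Then non(SN_κ) equals the minimum of the cardinals d_κ^b(≠^∞), taken over all b : κ → κ that are increasing with b(α) an infinite cardinal for every α < κ. -/
open Cardinal Set

namespace BGBS

/-- The generalised Cantor space `2^κ`. -/
def twoSet (κ : Ordinal.{0}) : Set (Ordinal.{0} → Ordinal.{0}) :=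
  prodSet κ (fun _ => 2)

/-- `X ⊆ 2^κ` is `κ`-strong measure zero: for every `f : κ → κ` there is a
sequence `⟨s_α : α < κ⟩`, with `s_α` a function from `f α` to `2`, such that
`X ⊆ ⋃_{α<κ} [s_α]`. -/
def SMZ (κ : Ordinal.{0}) (X : Set (Ordinal.{0} → Ordinal.{0})) : Prop :=
  ∀ f : Ordinal.{0} → Ordinal.{0}, (∀ α < κ, f α < κ) →
    ∃ s : Ordinal.{0} → Ordinal.{0} → Ordinal.{0},
      (∀ α < κ, ∀ ξ < f α, s α ξ < 2) ∧
      ∀ x ∈ X, ∃ α < κ, ∀ ξ < f α, x ξ = s α ξ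

/-- `non(SN_κ)`: the least cardinality of a non-`κ`-strong measure zero subset
of `2^κ`. -/
noncomputable def nonSN (κ : Ordinal.{0}) : Cardinal.{1} :=
  sInf { c | ∃ X, X ⊆ twoSet κ ∧ ¬ SMZ κ X ∧ c = #X }


/-! ### Auxiliary material for `stmt16` -/

section Stmt16Aux

variable {κ : Cardinal.{0}}

private lemma ord_lt_two_iff {a : Ordinal.{0}} : a < 2 ↔ a = 0 ∨ a = 1 := by
  rw [← one_add_one_eq_two, Ordinal.add_one_eq_succ, Order.lt_succ_iff, Ordinal.le_one_iff]

private lemma add_one_lt_K (hκ : κ.IsInaccessible) {α : Ordinal.{0}} (hα : α < κ.ord) :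
    α + 1 < κ.ord := by
  rw [Ordinal.add_one_eq_succ]
  exact (Cardinal.isSuccLimit_ord hκ.1.le).succ_lt hα

private lemma K_pos (hκ : κ.IsInaccessible) : (0 : Ordinal.{0}) < κ.ord :=
  (Cardinal.isSuccLimit_ord hκ.1.le).pos

/-- supremum of a small set of ordinals below `κ.ord` is below `κ.ord`, for regular `κ`. -/
private lemma csSup_lt_K (hreg : κ.IsRegular) {S : Set Ordinal.{0}} [Small.{0} S]
    (hS : #S < Cardinal.lift.{1} κ) (h : ∀ x ∈ S, x < κ.ord) : sSup S < κ.ord := by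
  have hK0 : (0 : Ordinal) < κ.ord := (Cardinal.isSuccLimit_ord hreg.1).pos
  rcases S.eq_empty_or_nonempty with rfl | hne
  · simpa using hK0
  · have hrange : S = Set.range (fun i : Shrink.{0} S => (((equivShrink S).symm i : S) : Ordinal)) := by
      ext x
      constructor
      · intro hx
        exact ⟨equivShrink S ⟨x, hx⟩, by simp⟩
      · rintro ⟨i, rfl⟩
        exact Subtype.mem _
    rw [hrange]
    have heq : sSup (Set.range (fun i : Shrink.{0} S => (((equivShrink S).symm i : S) : Ordinal)))
        = ⨆ i : Shrink.{0} S, (((equivShrink S).symm i : S) : Ordinal) := rfl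
    rw [heq]
    apply Ordinal.iSup_lt_ord
    · rw [hreg.cof_eq]
      have hmk : Cardinal.lift.{1} #(Shrink.{0} S) = #S := by
        simpa using (Cardinal.mk_shrink S)
      rw [← Cardinal.lift_lt.{0,1}, hmk]
      exact hS
    · intro i
      exact h _ (Subtype.mem _)

/-- cardinality of `twoSet o`. -/
private lemma mk_twoSet_le (o : Ordinal.{0}) :
    #(↥(twoSet o)) ≤ 2 ^ (Cardinal.lift.{1} o.card) := by
  have hinj : Function.Injective
      (fun v : ↥(twoSet o) => {ξ : ↥(Iio o) | (v : Ordinal → Ordinal) ξ = 1}) := by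
    intro v w hvw
    ext1
    funext ξ
    by_cases hξ : ξ < o
    · have hv2 := (v.2 ξ).1 hξ
      have hw2 := (w.2 ξ).1 hξ
      have hmem : ((v : Ordinal → Ordinal) ξ = 1) ↔ ((w : Ordinal → Ordinal) ξ = 1) :=
        Set.ext_iff.mp hvw ⟨ξ, hξ⟩
      have hv01 : (v : Ordinal → Ordinal) ξ = 0 ∨ (v : Ordinal → Ordinal) ξ = 1 :=
        ord_lt_two_iff.1 hv2
      have hw01 : (w : Ordinal → Ordinal) ξ = 0 ∨ (w : Ordinal → Ordinal) ξ = 1 :=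
        ord_lt_two_iff.1 hw2
      rcases hv01 with hv | hv <;> rcases hw01 with hw | hw <;> rw [hv, hw]
      · exact absurd (hmem.2 hw) (by rw [hv]; exact zero_ne_one)
      · exact absurd (hmem.1 hv) (by rw [hw]; exact zero_ne_one)
    · rw [(v.2 ξ).2 hξ, (w.2 ξ).2 hξ]
  calc #(↥(twoSet o)) ≤ #(Set (↥(Iio o))) := Cardinal.mk_le_of_injective hinj
    _ = 2 ^ #(↥(Iio o)) := Cardinal.mk_set
    _ = 2 ^ (Cardinal.lift.{1} o.card) := by rw [Ordinal.mk_Iio_ordinal]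

private lemma mk_twoSet_lt (hκ : κ.IsInaccessible) {o : Ordinal.{0}} (ho : o < κ.ord) :
    #(↥(twoSet o)) < Cardinal.lift.{1} κ := by
  apply lt_of_le_of_lt (mk_twoSet_le o)
  have h2 : (2 : Cardinal.{0}) ^ o.card < κ := hκ.isStrongLimit.two_power_lt (Cardinal.lt_ord.1 ho)
  calc (2:Cardinal.{1}) ^ (Cardinal.lift.{1} o.card) = Cardinal.lift.{1} (2 ^ o.card) := by
        rw [Cardinal.lift_two_power]
    _ < Cardinal.lift.{1} κ := Cardinal.lift_lt.2 h2

/-- The interval bookkeeping function: the interval for stage `α` starts at `iv b α`. -/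
private noncomputable def iv (b : Ordinal.{0} → Ordinal.{0}) (α : Ordinal.{0}) : Ordinal.{0} :=
  b α * (α + 1)

section WithB

variable {b : Ordinal.{0} → Ordinal.{0}}

private lemma b_isLimit (hb2 : ∀ α < κ.ord, b α < κ.ord ∧ IsInfCard (b α))
    {α : Ordinal.{0}} (hα : α < κ.ord) : Order.IsSuccLimit (b α) := by
  have h := (hb2 α hα).2
  exact h.1 ▸ Cardinal.isSuccLimit_ord h.2

private lemma b_pos (hb2 : ∀ α < κ.ord, b α < κ.ord ∧ IsInfCard (b α))
    {α : Ordinal.{0}} (hα : α < κ.ord) : 0 < b α :=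
  (b_isLimit hb2 hα).pos

private lemma iv_mono (hb1 : IncreasingOn κ.ord b) {α α' : Ordinal.{0}}
    (h : α ≤ α') (h' : α' < κ.ord) : iv b α ≤ iv b α' :=
  mul_le_mul' (hb1 α α' h h') (add_le_add_left h 1)

private lemma iv_add_b_eq (α : Ordinal.{0}) : iv b α + b α = b α * (α + 1 + 1) := by
  rw [Ordinal.add_one_eq_succ (α + 1), Ordinal.mul_succ, iv]

private lemma iv_add_b_le (hb1 : IncreasingOn κ.ord b) {α α' : Ordinal.{0}}
    (h : α < α') (h' : α' < κ.ord) : iv b α + b α ≤ iv b α' := by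
  rw [iv_add_b_eq]
  apply mul_le_mul' (hb1 α α' h.le h')
  have h1 : α + 1 ≤ α' := by rw [Ordinal.add_one_eq_succ, Order.succ_le_iff]; exact h
  exact add_le_add_left h1 1

private lemma iv_lt_iv (hb1 : IncreasingOn κ.ord b)
    (hb2 : ∀ α < κ.ord, b α < κ.ord ∧ IsInfCard (b α)) {α α' : Ordinal.{0}}
    (hα : α < κ.ord) (h : α < α') (h' : α' < κ.ord) : iv b α < iv b α' :=
  lt_of_lt_of_le (lt_add_of_pos_right _ (b_pos hb2 hα)) (iv_add_b_le hb1 h h')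

private lemma iv_add_lt_K (hκ : κ.IsInaccessible)
    (hb2 : ∀ α < κ.ord, b α < κ.ord ∧ IsInfCard (b α)) {α δ : Ordinal.{0}}
    (hα : α < κ.ord) (hδ : δ ≤ b α) : iv b α + δ < κ.ord := by
  have hend : iv b α + δ ≤ b α * (α + 1 + 1) := by
    rw [← iv_add_b_eq]
    exact add_le_add_right hδ _
  apply lt_of_le_of_lt hend
  rw [Cardinal.lt_ord, Ordinal.card_mul]
  apply Cardinal.mul_lt_of_lt hκ.1.le
  · exact Cardinal.lt_ord.1 (hb2 α hα).1
  · exact Cardinal.lt_ord.1 (add_one_lt_K hκ (add_one_lt_K hκ hα))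

private lemma iv_decode (hb1 : IncreasingOn κ.ord b)
    (hb2 : ∀ α < κ.ord, b α < κ.ord ∧ IsInfCard (b α)) {α α' δ δ' : Ordinal.{0}}
    (hα : α < κ.ord) (hα' : α' < κ.ord) (hδ : δ < b α) (hδ' : δ' < b α')
    (h : iv b α + δ = iv b α' + δ') : α = α' ∧ δ = δ' := by
  have key : ∀ β β' e e', β < κ.ord → β' < κ.ord → e < b β → e' < b β' →
      iv b β + e = iv b β' + e' → ¬ β < β' := by
    intro β β' e e' h1 h2 h3 h4 he hlt
    have hstrict : iv b β + e < iv b β' + e' :=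
      lt_of_lt_of_le (lt_of_lt_of_le ((add_lt_add_iff_left _).2 h3) (iv_add_b_le hb1 hlt h2))
        (le_add_of_nonneg_right zero_le)
    exact absurd he hstrict.ne
  have h1 : ¬ α < α' := key α α' δ δ' hα hα' hδ hδ' h
  have h2 : ¬ α' < α := key α' α δ' δ hα' hα hδ' hδ h.symm
  have heq : α = α' := le_antisymm (not_lt.1 h2) (not_lt.1 h1)
  subst heq
  refine ⟨rfl, ?_⟩
  exact add_left_cancel h

open scoped Classical in
private noncomputable def xg (K : Ordinal.{0}) (b g : Ordinal.{0} → Ordinal.{0}) :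
    Ordinal.{0} → Ordinal.{0} :=
  fun ξ => if ∃ α, α < K ∧ ξ = iv b α + g α then 1 else 0

private lemma xg_eq (hb1 : IncreasingOn κ.ord b)
    (hb2 : ∀ α < κ.ord, b α < κ.ord ∧ IsInfCard (b α)) {g : Ordinal.{0} → Ordinal.{0}}
    (hg : g ∈ prodSet κ.ord b) {α δ : Ordinal.{0}} (hα : α < κ.ord) (hδ : δ < b α) :
    xg κ.ord b g (iv b α + δ) = if δ = g α then 1 else 0 := by
  classical
  by_cases hcase : δ = g α
  · rw [if_pos hcase, xg, if_pos ⟨α, hα, by rw [hcase]⟩]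
  · rw [if_neg hcase, xg, if_neg]
    rintro ⟨α'', hα'', he⟩
    have hdec := iv_decode hb1 hb2 hα hα'' hδ ((hg α'').1 hα'') he
    exact hcase (hdec.1 ▸ hdec.2)

private lemma xg_mem (hκ : κ.IsInaccessible)
    (hb2 : ∀ α < κ.ord, b α < κ.ord ∧ IsInfCard (b α)) {g : Ordinal.{0} → Ordinal.{0}}
    (hg : g ∈ prodSet κ.ord b) : xg κ.ord b g ∈ twoSet κ.ord := by
  classical
  intro ξ
  constructor
  · intro _
    rw [xg]
    split
    · exact ord_lt_two_iff.2 (Or.inr rfl)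
    · exact ord_lt_two_iff.2 (Or.inl rfl)
  · intro hξ
    rw [xg, if_neg]
    rintro ⟨α, hα, rfl⟩
    exact hξ (iv_add_lt_K hκ hb2 hα ((hg α).1 hα).le)

end WithB

private lemma not_SMZ_twoSet (hκ : κ.IsInaccessible) : ¬ SMZ κ.ord (twoSet κ.ord) := by
  classical
  intro h
  obtain ⟨s, hs, hcov⟩ := h (fun α => α + 1) (fun α hα => add_one_lt_K hκ hα)
  set x : Ordinal.{0} → Ordinal.{0} :=
    fun α => if α < κ.ord ∧ s α α = 0 then 1 else 0 with hx
  have hxmem : x ∈ twoSet κ.ord := by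
    intro ξ
    constructor
    · intro _
      rw [hx]
      dsimp only
      split
      · exact ord_lt_two_iff.2 (Or.inr rfl)
      · exact ord_lt_two_iff.2 (Or.inl rfl)
    · intro hξ
      rw [hx]
      dsimp only
      rw [if_neg]
      rintro ⟨hξ', -⟩
      exact hξ hξ'
  obtain ⟨α, hα, hall⟩ := hcov x hxmem
  have hval := hall α (lt_add_of_pos_right α zero_lt_one)
  by_cases h0 : s α α = 0
  · rw [hx] at hval
    dsimp only at hval
    rw [if_pos ⟨hα, h0⟩, h0] at hval
    exact one_ne_zero hval
  · rw [hx] at hval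
    dsimp only at hval
    rw [if_neg (by rintro ⟨-, h⟩; exact h0 h)] at hval
    exact h0 hval.symm

private lemma exists_nonSN_witness (hκ : κ.IsInaccessible) :
    ∃ X, X ⊆ twoSet κ.ord ∧ ¬ SMZ κ.ord X ∧ #(↥X) = nonSN κ.ord := by
  have hne : Set.Nonempty {c : Cardinal.{1} | ∃ X, X ⊆ twoSet κ.ord ∧ ¬ SMZ κ.ord X ∧ c = #X} :=
    ⟨#(↥(twoSet κ.ord)), twoSet κ.ord, subset_rfl, not_SMZ_twoSet hκ, rfl⟩
  obtain ⟨X, h1, h2, h3⟩ := csInf_mem hne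
  exact ⟨X, h1, h2, h3.symm⟩

section WithB2

variable {b : Ordinal.{0} → Ordinal.{0}}

private lemma exists_dNeq_witness (hκ : κ.IsInaccessible)
    (hb2 : ∀ α < κ.ord, b α < κ.ord ∧ IsInfCard (b α)) :
    ∃ W, W ⊆ prodSet κ.ord b ∧ (∀ x ∈ prodSet κ.ord b, ∃ y ∈ W, neStar κ.ord x y) ∧
      #(↥W) = dNeq κ.ord b := by
  classical
  have hne : Set.Nonempty {c : Cardinal.{1} | ∃ W, W ⊆ prodSet κ.ord b ∧
      (∀ x ∈ prodSet κ.ord b, ∃ y ∈ W, neStar κ.ord x y) ∧ c = #(↥W)} := by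
    refine ⟨#(↥(prodSet κ.ord b)), prodSet κ.ord b, subset_rfl, ?_, rfl⟩
    intro f hf
    refine ⟨fun α => if α < κ.ord then f α + 1 else 0, ?_, ?_⟩
    · intro α
      constructor
      · intro hα
        dsimp only
        rw [if_pos hα]
        have hsucc := (b_isLimit hb2 hα).succ_lt ((hf α).1 hα)
        rwa [← Ordinal.add_one_eq_succ] at hsucc
      · intro hα
        dsimp only
        rw [if_neg hα]
    · refine ⟨0, K_pos hκ, ?_⟩
      intro α _ hαK
      dsimp only
      rw [if_pos hαK]
      exact fun hcontra => absurd hcontra (ne_of_lt (lt_add_of_pos_right _ zero_lt_one))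
  obtain ⟨W, h1, h2, h3⟩ := csInf_mem hne
  exact ⟨W, h1, h2, h3.symm⟩

private lemma lift_le_witness (hκ : κ.IsInaccessible)
    (hb2 : ∀ α < κ.ord, b α < κ.ord ∧ IsInfCard (b α))
    {W : Set (Ordinal.{0} → Ordinal.{0})} (hsub : W ⊆ prodSet κ.ord b)
    (hwit : ∀ x ∈ prodSet κ.ord b, ∃ y ∈ W, neStar κ.ord x y) :
    Cardinal.lift.{1} κ ≤ #(↥W) := by
  classical
  by_contra hlt
  push_neg at hlt
  have hzero : (fun _ : Ordinal.{0} => (0 : Ordinal.{0})) ∈ prodSet κ.ord b :=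
    fun α => ⟨fun hα => b_pos hb2 hα, fun _ => rfl⟩
  obtain ⟨g0, hg0, -⟩ := hwit _ hzero
  haveI : Nonempty (↥W × ↥(Iio κ.ord)) := ⟨⟨⟨g0, hg0⟩, ⟨0, K_pos hκ⟩⟩⟩
  have hcard : #(↥W × ↥(Iio κ.ord)) ≤ #(↥(Iio κ.ord)) := by
    rw [Cardinal.mk_prod, Cardinal.lift_id, Cardinal.lift_id, Ordinal.mk_Iio_ordinal,
      Cardinal.card_ord]
    calc #(↥W) * Cardinal.lift.{1} κ ≤ Cardinal.lift.{1} κ * Cardinal.lift.{1} κ :=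
          mul_le_mul_left hlt.le _
      _ = Cardinal.lift.{1} κ := Cardinal.mul_eq_self (Cardinal.aleph0_le_lift.2 hκ.1.le)
  obtain ⟨e⟩ := (Cardinal.le_def _ _).1 hcard
  set σ := Function.invFun e with hσ
  have hσsurj : Function.Surjective σ := Function.invFun_surjective e.injective
  set f : Ordinal.{0} → Ordinal.{0} :=
    fun α => if h : α < κ.ord then ((σ ⟨α, h⟩).1 : Ordinal → Ordinal) α else 0 with hf
  have hfmem : f ∈ prodSet κ.ord b := by
    intro α
    constructor
    · intro hα
      rw [hf]
      dsimp only
      rw [dif_pos hα]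
      exact ((hsub (σ ⟨α, hα⟩).1.2) α).1 hα
    · intro hα
      rw [hf]
      dsimp only
      rw [dif_neg hα]
  obtain ⟨g, hgW, β, hβ, hne⟩ := hwit f hfmem
  by_cases hbnd : ∃ α : ↥(Iio κ.ord), (σ α).1 = ⟨g, hgW⟩ ∧ β < α.1
  · obtain ⟨α, hfib, hβα⟩ := hbnd
    apply hne α.1 hβα α.2
    have hval : f α.1 = ((σ α).1 : Ordinal → Ordinal) α.1 := by
      rw [hf]
      dsimp only
      rw [dif_pos (show α.1 < κ.ord from α.2)]
    rw [hval, hfib]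
  · push_neg at hbnd
    have hsur2 : Function.Surjective
        (fun a : {α : ↥(Iio κ.ord) // (σ α).1 = ⟨g, hgW⟩} => (σ a.1).2) := by
      intro δ
      obtain ⟨ξ, hξ⟩ := hσsurj ⟨⟨g, hgW⟩, δ⟩
      refine ⟨⟨ξ, by rw [hξ]⟩, show (σ ξ).2 = δ by rw [hξ]⟩
    have h1 : #(↥(Iio κ.ord)) ≤ #{α : ↥(Iio κ.ord) // (σ α).1 = ⟨g, hgW⟩} :=
      Cardinal.mk_le_of_surjective hsur2
    have hembed : #{α : ↥(Iio κ.ord) // (σ α).1 = ⟨g, hgW⟩} ≤ #(↥(Iio (β + 1))) := by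
      apply Cardinal.mk_le_of_injective
        (f := fun a => (⟨a.1.1, lt_of_le_of_lt (hbnd a.1 a.2)
          (lt_add_of_pos_right β zero_lt_one)⟩ : ↥(Iio (β + 1))))
      intro a a' haa
      have h' := congrArg (fun z : ↥(Iio (β + 1)) => z.1) haa
      exact Subtype.ext (Subtype.ext h')
    have hfin : #(↥(Iio (β + 1))) < #(↥(Iio κ.ord)) := by
      rw [Ordinal.mk_Iio_ordinal, Ordinal.mk_Iio_ordinal, Cardinal.card_ord]
      exact Cardinal.lift_lt.2 (Cardinal.lt_ord.1 (add_one_lt_K hκ hβ))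
    exact absurd ((h1.trans hembed).trans_lt hfin) (lt_irrefl _)

end WithB2

private lemma nonSN_le_dNeq (hκ : κ.IsInaccessible) {b : Ordinal.{0} → Ordinal.{0}}
    (hb1 : IncreasingOn κ.ord b) (hb2 : ∀ α < κ.ord, b α < κ.ord ∧ IsInfCard (b α)) :
    nonSN κ.ord ≤ dNeq κ.ord b := by
  classical
  obtain ⟨W, hWsub, hWwit, hWcard⟩ := exists_dNeq_witness hκ hb2
  have hWge : Cardinal.lift.{1} κ ≤ #(↥W) := lift_le_witness hκ hb2 hWsub hWwit
  set X : Set (Ordinal.{0} → Ordinal.{0}) :=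
    {x | ∃ g ∈ W, ∃ γ < κ.ord, ∃ u ∈ twoSet γ,
      x = fun ξ => if ξ < γ then u ξ else xg κ.ord b g ξ} with hX
  have hXsub : X ⊆ twoSet κ.ord := by
    rintro x ⟨g, hg, γ, hγ, u, hu, rfl⟩
    intro ξ
    constructor
    · intro hξ
      dsimp only
      by_cases hc : ξ < γ
      · rw [if_pos hc]; exact (hu ξ).1 hc
      · rw [if_neg hc]; exact ((xg_mem hκ hb2 (hWsub hg)) ξ).1 hξ
    · intro hξ
      dsimp only
      have hc : ¬ ξ < γ := fun hc => hξ (hc.trans hγ)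
      rw [if_neg hc]
      exact ((xg_mem hκ hb2 (hWsub hg)) ξ).2 hξ
  have hXcard : #(↥X) ≤ #(↥W) := by
    have hmap : X ⊆ Set.range (fun p : ↥W × Σ γ : ↥(Iio κ.ord), ↥(twoSet γ.1) =>
        fun ξ => if ξ < p.2.1.1 then (p.2.2 : Ordinal → Ordinal) ξ
          else xg κ.ord b (p.1 : Ordinal → Ordinal) ξ) := by
      rintro x ⟨g, hg, γ, hγ, u, hu, rfl⟩
      exact ⟨⟨⟨g, hg⟩, ⟨⟨γ, hγ⟩, ⟨u, hu⟩⟩⟩, rfl⟩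
    have h2 := (Cardinal.mk_le_mk_of_subset hmap).trans Cardinal.mk_range_le
    have h3 : #(↥W × Σ γ : ↥(Iio κ.ord), ↥(twoSet γ.1)) ≤ #(↥W) := by
      rw [Cardinal.mk_prod, Cardinal.lift_id, Cardinal.lift_id, Cardinal.mk_sigma]
      have hsum : (Cardinal.sum fun γ : ↥(Iio κ.ord) => #(↥(twoSet γ.1)))
          ≤ Cardinal.lift.{1} κ := by
        calc Cardinal.sum (fun γ : ↥(Iio κ.ord) => #(↥(twoSet γ.1)))
            ≤ Cardinal.sum (fun _ : ↥(Iio κ.ord) => Cardinal.lift.{1} κ) :=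
              Cardinal.sum_le_sum _ _ (fun γ => (mk_twoSet_lt hκ γ.2).le)
          _ = #(↥(Iio κ.ord)) * Cardinal.lift.{1} κ := Cardinal.sum_const' _ _
          _ = Cardinal.lift.{1} κ * Cardinal.lift.{1} κ := by
              rw [Ordinal.mk_Iio_ordinal, Cardinal.card_ord]
          _ = Cardinal.lift.{1} κ := Cardinal.mul_eq_self (Cardinal.aleph0_le_lift.2 hκ.1.le)
      calc #(↥W) * Cardinal.sum (fun γ : ↥(Iio κ.ord) => #(↥(twoSet γ.1)))
          ≤ #(↥W) * Cardinal.lift.{1} κ := mul_le_mul_right hsum _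
        _ ≤ #(↥W) * #(↥W) := mul_le_mul_right hWge _
        _ = #(↥W) := Cardinal.mul_eq_self (le_trans (Cardinal.aleph0_le_lift.2 hκ.1.le) hWge)
    exact h2.trans h3
  have hXsmz : ¬ SMZ κ.ord X := by
    intro hsmz
    have hfstar : ∀ α < κ.ord, iv b α + b α < κ.ord := fun α hα => iv_add_lt_K hκ hb2 hα le_rfl
    obtain ⟨s, hs, hcov⟩ := hsmz (fun α => iv b α + b α) hfstar
    set t : Ordinal.{0} → Ordinal.{0} := fun α =>
      if h : α < κ.ord then
        (if hex : ∃ δ, δ < b α ∧ ∀ δ', δ' < b α → (s α (iv b α + δ') = 1 ↔ δ' = δ) then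
          Classical.choose hex else 0)
      else 0 with ht
    have htmem : t ∈ prodSet κ.ord b := by
      intro α
      constructor
      · intro hα
        rw [ht]; dsimp only; rw [dif_pos hα]
        split
        · next hex => exact (Classical.choose_spec hex).1
        · exact b_pos hb2 hα
      · intro hα
        rw [ht]; dsimp only; rw [dif_neg hα]
    obtain ⟨g, hgW, β, hβK, hne⟩ := hWwit t htmem
    set γ : Ordinal.{0} := iv b β + b β with hγdef
    have hγK : γ < κ.ord := iv_add_lt_K hκ hb2 hβK le_rfl
    set u : Ordinal.{0} → Ordinal.{0} := fun ξ =>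
      if ∃ α, α ≤ β ∧ ξ = iv b α ∧ s α ξ = 0 then 1 else 0 with hu
    have hiv_lt_γ : ∀ α, α ≤ β → iv b α < γ :=
      fun α hαβ => lt_of_le_of_lt (iv_mono hb1 hαβ hβK)
        (lt_add_of_pos_right _ (b_pos hb2 hβK))
    have humem : u ∈ twoSet γ := by
      intro ξ
      constructor
      · intro _
        rw [hu]; dsimp only
        split
        · exact ord_lt_two_iff.2 (Or.inr rfl)
        · exact ord_lt_two_iff.2 (Or.inl rfl)
      · intro hξ
        rw [hu]; dsimp only
        rw [if_neg]
        rintro ⟨α, hαβ, rfl, -⟩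
        exact hξ (hiv_lt_γ α hαβ)
    set x : Ordinal.{0} → Ordinal.{0} := fun ξ => if ξ < γ then u ξ else xg κ.ord b g ξ with hxdef
    have hxX : x ∈ X := ⟨g, hgW, γ, hγK, u, humem, rfl⟩
    obtain ⟨α, hαK, hall⟩ := hcov x hxX
    by_cases hcase : α ≤ β
    · have hξdom : iv b α < iv b α + b α := lt_add_of_pos_right _ (b_pos hb2 hαK)
      have hval := hall (iv b α) hξdom
      have hxval : x (iv b α) = u (iv b α) := by
        rw [hxdef]; dsimp only; rw [if_pos (hiv_lt_γ α hcase)]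
      by_cases h0 : s α (iv b α) = 0
      · have huval : u (iv b α) = 1 := by
          rw [hu]; dsimp only; rw [if_pos ⟨α, hcase, rfl, h0⟩]
        rw [hxval, huval, h0] at hval
        exact one_ne_zero hval
      · have huval : u (iv b α) = 0 := by
          rw [hu]; dsimp only; rw [if_neg]
          rintro ⟨α', hα'β, hiv, h0'⟩
          have hα'K : α' < κ.ord := lt_of_le_of_lt hα'β hβK
          have heqα : α' = α := by
            by_contra hne'
            rcases lt_or_gt_of_ne hne' with hlt | hlt
            · exact absurd hiv (iv_lt_iv hb1 hb2 hα'K hlt hαK).ne'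
            · exact absurd hiv (iv_lt_iv hb1 hb2 hαK hlt hα'K).ne
          rw [heqα] at h0'
          exact h0 h0'
        rw [hxval, huval] at hval
        exact h0 hval.symm
    · push_neg at hcase
      have htne := hne α hcase hαK
      have hgα : g α < b α := ((hWsub hgW) α).1 hαK
      have hfind : ∃ δ', δ' < b α ∧
          (if δ' = g α then (1 : Ordinal.{0}) else 0) ≠ s α (iv b α + δ') := by
        by_cases hex : ∃ δ, δ < b α ∧ ∀ δ', δ' < b α → (s α (iv b α + δ') = 1 ↔ δ' = δ)
        · have htα : t α = Classical.choose hex := by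
            rw [ht]; dsimp only; rw [dif_pos hαK, dif_pos hex]
          have hspec := (Classical.choose_spec hex).2
          refine ⟨g α, hgα, ?_⟩
          rw [if_pos rfl]
          intro heq
          have hgc : g α = Classical.choose hex := (hspec (g α) hgα).1 heq.symm
          exact htne (htα.trans hgc.symm)
        · have h2 : ¬ ∀ δ', δ' < b α → (s α (iv b α + δ') = 1 ↔ δ' = g α) :=
            fun hc => hex ⟨g α, hgα, hc⟩
          push_neg at h2
          obtain ⟨δ', hδ'b, hniff⟩ := h2
          refine ⟨δ', hδ'b, ?_⟩
          by_cases heq : δ' = g α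
          · rw [if_pos heq]
            intro h1'
            rcases hniff with ⟨-, hne2⟩ | ⟨hs1, -⟩
            · exact hne2 heq
            · exact hs1 h1'.symm
          · rw [if_neg heq]
            intro h0'
            rcases hniff with ⟨hs1, -⟩ | ⟨-, heq2⟩
            · exact zero_ne_one (h0'.trans hs1)
            · exact heq heq2
      obtain ⟨δ', hδ'b, hdiff⟩ := hfind
      have hγle : γ ≤ iv b α := iv_add_b_le hb1 hcase hαK
      have hxval : x (iv b α + δ') = xg κ.ord b g (iv b α + δ') := by
        rw [hxdef]; dsimp only
        rw [if_neg (not_lt.2 (hγle.trans (le_add_of_nonneg_right zero_le)))]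
      have hxgval := xg_eq hb1 hb2 (hWsub hgW) hαK hδ'b
      have hdom : iv b α + δ' < iv b α + b α := (add_lt_add_iff_left _).2 hδ'b
      have hval := hall (iv b α + δ') hdom
      rw [hxval, hxgval] at hval
      exact hdiff hval
  have h1 : nonSN κ.ord ≤ #(↥X) := csInf_le' ⟨X, hXsub, hXsmz, rfl⟩
  rw [← hWcard]
  exact h1.trans hXcard

private lemma exists_admissible_b (hκ : κ.IsInaccessible) :
    ∃ b : Ordinal.{0} → Ordinal.{0}, IncreasingOn κ.ord b ∧
      (∀ α < κ.ord, b α < κ.ord ∧ IsInfCard (b α)) ∧ dNeq κ.ord b ≤ nonSN κ.ord := by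
  classical
  obtain ⟨X, hXsub, hXsmz, hXcard⟩ := exists_nonSN_witness hκ
  rw [SMZ] at hXsmz
  push_neg at hXsmz
  obtain ⟨f, hf, hesc⟩ := hXsmz
  set F : Ordinal.{0} → Ordinal.{0} :=
    fun α => sSup (Set.range fun ξ : ↥(Iic α) => f ξ.1) with hF
  have hFle : ∀ α, f α ≤ F α := fun α =>
    le_csSup Ordinal.bddAbove_of_small ⟨⟨α, le_refl α⟩, rfl⟩
  have hFmono : ∀ {α α' : Ordinal.{0}}, α ≤ α' → F α ≤ F α' := by
    intro α α' h
    have hsub : (Set.range fun ξ : ↥(Iic α) => f ξ.1) ⊆ (Set.range fun ξ : ↥(Iic α') => f ξ.1) := by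
      rintro z ⟨ξ, rfl⟩
      exact ⟨⟨ξ.1, le_trans ξ.2 h⟩, rfl⟩
    exact csSup_le_csSup Ordinal.bddAbove_of_small ⟨f α, ⟨⟨α, le_refl α⟩, rfl⟩⟩ hsub
  have hFK : ∀ α, α < κ.ord → F α < κ.ord := by
    intro α hα
    apply csSup_lt_K hκ.isRegular
    · apply lt_of_le_of_lt Cardinal.mk_range_le
      have hIic : (Iic α : Set Ordinal.{0}) = Iio (α + 1) := by
        rw [Ordinal.add_one_eq_succ, Order.Iio_succ]
      rw [hIic, Ordinal.mk_Iio_ordinal]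
      exact Cardinal.lift_lt.2 (Cardinal.lt_ord.1 (add_one_lt_K hκ hα))
    · rintro z ⟨ξ, rfl⟩
      exact hf ξ.1 (lt_of_le_of_lt ξ.2 hα)
  set b : Ordinal.{0} → Ordinal.{0} := fun α =>
    if α < κ.ord then ((2 : Cardinal.{0}) ^ ((F α).card + ℵ₀)).ord else 0 with hb
  have hbval : ∀ {α}, α < κ.ord → b α = ((2 : Cardinal.{0}) ^ ((F α).card + ℵ₀)).ord := by
    intro α hα
    rw [hb]
    dsimp only
    rw [if_pos hα]
  have hb1 : IncreasingOn κ.ord b := by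
    intro α β hαβ hβK
    rw [hbval (lt_of_le_of_lt hαβ hβK), hbval hβK]
    apply Cardinal.ord_le_ord.2
    exact Cardinal.power_le_power_left two_ne_zero
      (add_le_add_left (Ordinal.card_le_card (hFmono hαβ)) ℵ₀)
  have hb2 : ∀ α < κ.ord, b α < κ.ord ∧ IsInfCard (b α) := by
    intro α hα
    rw [hbval hα]
    refine ⟨?_, ?_, ?_⟩
    · apply Cardinal.ord_lt_ord.2
      apply hκ.isStrongLimit.two_power_lt
      exact Cardinal.add_lt_of_lt hκ.1.le (Cardinal.lt_ord.1 (hFK α hα)) hκ.1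
    · rw [Cardinal.card_ord]
    · rw [Cardinal.card_ord]
      calc ℵ₀ ≤ 2 ^ (ℵ₀ : Cardinal.{0}) := (Cardinal.cantor ℵ₀).le
        _ ≤ 2 ^ ((F α).card + ℵ₀) := Cardinal.power_le_power_left two_ne_zero le_add_self
  have hcode : ∀ α, α < κ.ord → Nonempty (↥(twoSet (F α)) ↪ ↥(Iio (b α))) := by
    intro α hα
    apply (Cardinal.le_def _ _).1
    calc #(↥(twoSet (F α))) ≤ 2 ^ (Cardinal.lift.{1} (F α).card) := mk_twoSet_le _
      _ ≤ 2 ^ (Cardinal.lift.{1} ((F α).card + ℵ₀)) :=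
          Cardinal.power_le_power_left two_ne_zero (Cardinal.lift_le.2 (self_le_add_right _ _))
      _ = Cardinal.lift.{1} ((2 : Cardinal.{0}) ^ ((F α).card + ℵ₀)) := by
          rw [Cardinal.lift_two_power]
      _ = #(↥(Iio (b α))) := by rw [Ordinal.mk_Iio_ordinal, hbval hα, Cardinal.card_ord]
  have J : ∀ α, α < κ.ord → (↥(twoSet (F α)) ↪ ↥(Iio (b α))) :=
    fun α hα => Classical.choice (hcode α hα)
  set res : (Ordinal.{0} → Ordinal.{0}) → Ordinal.{0} → (Ordinal.{0} → Ordinal.{0}) :=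
    fun x α => fun ξ => if ξ < F α then x ξ else 0 with hres
  have hresmem : ∀ x ∈ X, ∀ {α : Ordinal.{0}}, α < κ.ord → res x α ∈ twoSet (F α) := by
    intro x hx α hα ξ
    constructor
    · intro hξ
      rw [hres]
      dsimp only
      rw [if_pos hξ]
      exact ((hXsub hx) ξ).1 (hξ.trans (hFK α hα))
    · intro hξ
      rw [hres]
      dsimp only
      rw [if_neg hξ]
  set G : ↥X → (Ordinal.{0} → Ordinal.{0}) := fun x => fun α =>
    if h : α < κ.ord then ((J α h) ⟨res x.1 α, hresmem x.1 x.2 h⟩ : ↥(Iio (b α))).1 else 0 with hG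
  set D : Set (Ordinal.{0} → Ordinal.{0}) := Set.range G with hD
  have hDsub : D ⊆ prodSet κ.ord b := by
    rintro y ⟨x, rfl⟩
    intro α
    constructor
    · intro hα
      rw [hG]
      dsimp only
      rw [dif_pos hα]
      exact ((J α hα) ⟨res x.1 α, hresmem x.1 x.2 hα⟩).2
    · intro hα
      rw [hG]
      dsimp only
      rw [dif_neg hα]
  have hDwit : ∀ tt ∈ prodSet κ.ord b, ∃ y ∈ D, neStar κ.ord tt y := by
    intro tt htt
    set s : Ordinal.{0} → Ordinal.{0} → Ordinal.{0} := fun α =>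
      if h : α < κ.ord then
        (if hex : ∃ v : ↥(twoSet (F α)), ((J α h) v : ↥(Iio (b α))).1 = tt α then
          ((Classical.choose hex : ↥(twoSet (F α))) : Ordinal → Ordinal) else fun _ => 0)
      else fun _ => 0 with hsdef
    have hsvalid : ∀ α < κ.ord, ∀ ξ < f α, s α ξ < 2 := by
      intro α hα ξ hξ
      rw [hsdef]
      dsimp only
      rw [dif_pos hα]
      split
      · next hex =>
        exact (((Classical.choose hex : ↥(twoSet (F α))).2 ξ)).1 (lt_of_lt_of_le hξ (hFle α))
      · exact ord_lt_two_iff.2 (Or.inl rfl)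
    obtain ⟨x, hxX, hxesc⟩ := hesc s hsvalid
    refine ⟨G ⟨x, hxX⟩, ⟨⟨x, hxX⟩, rfl⟩, 0, K_pos hκ, ?_⟩
    intro α _ hαK heq
    have hGα : G ⟨x, hxX⟩ α = ((J α hαK) ⟨res x α, hresmem x hxX hαK⟩ : ↥(Iio (b α))).1 := by
      rw [hG]
      dsimp only
      rw [dif_pos hαK]
    have hex : ∃ v : ↥(twoSet (F α)), ((J α hαK) v : ↥(Iio (b α))).1 = tt α :=
      ⟨⟨res x α, hresmem x hxX hαK⟩, by rw [heq, hGα]⟩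
    have hsα : s α = ((Classical.choose hex : ↥(twoSet (F α))) : Ordinal → Ordinal) := by
      rw [hsdef]
      dsimp only
      rw [dif_pos hαK, dif_pos hex]
    have hJeq : (J α hαK) (Classical.choose hex) = (J α hαK) ⟨res x α, hresmem x hxX hαK⟩ := by
      apply Subtype.ext
      rw [Classical.choose_spec hex, heq, hGα]
    have hveq : (Classical.choose hex : ↥(twoSet (F α))) = ⟨res x α, hresmem x hxX hαK⟩ :=
      (J α hαK).injective hJeq
    have hsres : s α = res x α := by
      rw [hsα, hveq]
    obtain ⟨ξ, hξf, hxne⟩ := hxesc α hαK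
    apply hxne
    rw [hsres, hres]
    dsimp only
    rw [if_pos (lt_of_lt_of_le hξf (hFle α))]
  refine ⟨b, hb1, hb2, ?_⟩
  have hdle : dNeq κ.ord b ≤ #(↥D) := csInf_le' ⟨D, hDsub, hDwit, rfl⟩
  rw [← hXcard]
  exact hdle.trans Cardinal.mk_range_le

end Stmt16Aux

/-- `non(SN_κ)` equals the minimum of the eventual difference numbers
`d_κ^b(≠^∞)` over all increasing `b : κ → κ` whose values are infinite
cardinals. -/
theorem stmt16 (κ : Cardinal.{0}) (hκ : κ.IsInaccessible) :
    nonSN κ.ord =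
      sInf { c : Cardinal.{1} | ∃ b : Ordinal.{0} → Ordinal.{0},
        IncreasingOn κ.ord b ∧ (∀ α < κ.ord, b α < κ.ord ∧ IsInfCard (b α)) ∧
        c = dNeq κ.ord b } := by
  obtain ⟨b0, hb01, hb02, hb0le⟩ := exists_admissible_b hκ
  apply le_antisymm
  · apply le_csInf
    · exact ⟨dNeq κ.ord b0, b0, hb01, hb02, rfl⟩
    · rintro c ⟨b, hb1, hb2, rfl⟩
      exact nonSN_le_dNeq hκ hb1 hb2
  · exact le_trans (csInf_le' ⟨b0, hb01, hb02, rfl⟩) hb0le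

end BGBS
end

section
/- Let κ be strongly inaccessible. Then for every b : κ → κ that is increasing with b(α) an infinite cardinal for every α < κ, the cofinal equality number b_κ^b(≠^∞) is at most cov(SN_κ); equivalently, sup of the cardinals b_κ^b(≠^∞) over all such b is at most cov(SN_κ). -/
open Cardinal Set

namespace BGBS

/-- `cov(SN_κ)`: the least cardinality of a family of `κ`-strong measure zero
sets covering `2^κ`. -/
noncomputable def covSN (κ : Ordinal.{0}) : Cardinal.{1} :=
  sInf { c | ∃ 𝒞 : Set (Set (Ordinal.{0} → Ordinal.{0})),
    (∀ X ∈ 𝒞, X ⊆ twoSet κ ∧ SMZ κ X) ∧ ⋃₀ 𝒞 = twoSet κ ∧ c = #𝒞 }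

-- ===== auxiliary development =====

open scoped Classical

/-- The coding of `g ∈ ∏b` as an element of `2^κ`: a `1` at position
`b γ * γ + g γ` for each `γ < κ`, `0` elsewhere. -/
noncomputable def codeFn (κ : Ordinal.{0}) (b : Ordinal.{0} → Ordinal.{0})
    (g : Ordinal.{0} → Ordinal.{0}) : Ordinal.{0} → Ordinal.{0} :=
  fun ζ => if ∃ γ, γ < κ ∧ ζ = b γ * γ + g γ then 1 else 0

/-- Decoding: the offset within the `γ`-th interval where `s` takes value `1`. -/
noncomputable def decFn (b : Ordinal.{0} → Ordinal.{0})
    (s : Ordinal.{0} → Ordinal.{0}) (γ : Ordinal.{0}) : Ordinal.{0} :=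
  if h : ∃ ξ, ξ < b γ ∧ s (b γ * γ + ξ) = 1 then h.choose else 0

section Lemmas

variable {κ : Cardinal.{0}} {b : Ordinal.{0} → Ordinal.{0}}

lemma bpos (hb : ∀ α < κ.ord, b α < κ.ord ∧ IsInfCard (b α)) {γ : Ordinal.{0}}
    (hγ : γ < κ.ord) : 0 < b γ := by
  rcases (hb γ hγ).2 with ⟨h1, h2⟩
  rw [pos_iff_ne_zero]
  intro h0
  rw [h0] at h1 h2
  simp [Ordinal.card_zero] at h2
  exact Cardinal.aleph0_ne_zero (le_antisymm (by simpa using h2) zero_le)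

lemma flen_lt (hκ : κ.IsInaccessible) (hb : ∀ α < κ.ord, b α < κ.ord ∧ IsInfCard (b α))
    {γ : Ordinal.{0}} (hγ : γ < κ.ord) : b γ * γ + b γ < κ.ord := by
  have hℵ : ℵ₀ ≤ κ := hκ.1.le
  have h1 : (b γ).card < κ := Cardinal.lt_ord.mp (hb γ hγ).1
  have h2 : γ.card < κ := Cardinal.lt_ord.mp hγ
  rw [Cardinal.lt_ord, Ordinal.card_add, Ordinal.card_mul]
  exact Cardinal.add_lt_of_lt hℵ (Cardinal.mul_lt_of_lt hℵ h1 h2) h1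

/-- Monotonicity of interval endpoints. -/
lemma interval_le (hbinc : IncreasingOn κ.ord b) {γ γ' : Ordinal.{0}}
    (h : γ < γ') (hγ' : γ' < κ.ord) : b γ * γ + b γ ≤ b γ' * γ' := by
  have h1 : b γ * γ + b γ = b γ * Order.succ γ := (Ordinal.mul_succ _ _).symm
  rw [h1]
  calc b γ * Order.succ γ ≤ b γ' * Order.succ γ :=
        mul_le_mul_left (hbinc γ γ' h.le hγ') _
    _ ≤ b γ' * γ' := mul_le_mul_right (Order.succ_le_of_lt h) _

/-- Positions in distinct intervals are distinct. -/
lemma pos_ne (hbinc : IncreasingOn κ.ord b) {γ γ' ξ ξ' : Ordinal.{0}}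
    (hγ : γ < κ.ord) (hγ' : γ' < κ.ord) (hne : γ ≠ γ')
    (hξ : ξ < b γ) (hξ' : ξ' < b γ') : b γ * γ + ξ ≠ b γ' * γ' + ξ' := by
  rcases hne.lt_or_gt with h | h
  · have : b γ * γ + ξ < b γ' * γ' + ξ' :=
      lt_of_lt_of_le (by exact add_lt_add_right hξ _)
        (le_trans (interval_le hbinc h hγ') le_self_add)
    exact this.ne
  · have : b γ' * γ' + ξ' < b γ * γ + ξ :=
      lt_of_lt_of_le (by exact add_lt_add_right hξ' _)
        (le_trans (interval_le hbinc h hγ) le_self_add)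
    exact this.ne'

/-- Code correctness at a position inside interval `ζ`. -/
lemma code_eq_one_iff (hbinc : IncreasingOn κ.ord b)
    {g : Ordinal.{0} → Ordinal.{0}} (hg : g ∈ prodSet κ.ord b)
    {ζ ξ : Ordinal.{0}} (hζ : ζ < κ.ord) (hξ : ξ < b ζ) :
    codeFn κ.ord b g (b ζ * ζ + ξ) = 1 ↔ ξ = g ζ := by
  unfold codeFn
  split_ifs with h
  · simp only [iff_true_intro rfl, true_iff]
    obtain ⟨γ, hγ, he⟩ := h
    have hgγ : g γ < b γ := (hg γ).1 hγ
    rcases eq_or_ne ζ γ with rfl | hne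
    · simpa using add_left_cancel_iff.mp he
    · exact absurd he (pos_ne hbinc hζ hγ hne hξ hgγ)
  · constructor
    · intro h1; exact absurd h1 (by norm_num)
    · rintro rfl
      exact absurd ⟨ζ, hζ, rfl⟩ h

lemma code_mem_twoSet (hκ : κ.IsInaccessible)
    (hb : ∀ α < κ.ord, b α < κ.ord ∧ IsInfCard (b α))
    {g : Ordinal.{0} → Ordinal.{0}} (hg : g ∈ prodSet κ.ord b) :
    codeFn κ.ord b g ∈ twoSet κ.ord := by
  intro ζ
  constructor
  · intro _
    unfold codeFn
    split_ifs
    · exact one_lt_two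
    · exact lt_of_lt_of_le zero_lt_one one_le_two
  · intro hζ
    unfold codeFn
    rw [if_neg]
    rintro ⟨γ, hγ, rfl⟩
    have : b γ * γ + g γ < κ.ord :=
      lt_of_lt_of_le (add_lt_add_right ((hg γ).1 hγ) _) (flen_lt hκ hb hγ).le
    exact hζ this

/-- Decoding is correct: if `s` agrees with `codeFn g` on `[0, bζ*ζ+bζ)`
then `decFn b s ζ = g ζ`. -/
lemma dec_correct (hbinc : IncreasingOn κ.ord b)
    {g s : Ordinal.{0} → Ordinal.{0}} (hg : g ∈ prodSet κ.ord b)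
    {ζ : Ordinal.{0}} (hζ : ζ < κ.ord)
    (hagree : ∀ p < b ζ * ζ + b ζ, codeFn κ.ord b g p = s p) :
    decFn b s ζ = g ζ := by
  have hgζ : g ζ < b ζ := (hg ζ).1 hζ
  have key : ∀ ξ < b ζ, (s (b ζ * ζ + ξ) = 1 ↔ ξ = g ζ) := by
    intro ξ hξ
    rw [← hagree _ (add_lt_add_right hξ _)]
    exact code_eq_one_iff hbinc hg hζ hξ
  have h : ∃ ξ, ξ < b ζ ∧ s (b ζ * ζ + ξ) = 1 :=
    ⟨g ζ, hgζ, (key _ hgζ).mpr rfl⟩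
  rw [decFn, dif_pos h]
  exact (key _ h.choose_spec.1).mp h.choose_spec.2

lemma dec_lt (hb : ∀ α < κ.ord, b α < κ.ord ∧ IsInfCard (b α))
    (s : Ordinal.{0} → Ordinal.{0}) {ζ : Ordinal.{0}} (hζ : ζ < κ.ord) :
    decFn b s ζ < b ζ := by
  rw [decFn]
  split_ifs with h
  · exact h.choose_spec.1
  · exact bpos hb hζ

end Lemmas


section Key

variable {κ : Cardinal.{0}} {b : Ordinal.{0} → Ordinal.{0}}

lemma key (hκ : κ.IsInaccessible) (hbinc : IncreasingOn κ.ord b)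
    (hb : ∀ α < κ.ord, b α < κ.ord ∧ IsInfCard (b α))
    (c : ↥(Iio κ.ord) ≃ ↥(Iio κ.ord) × ↥(Iio κ.ord))
    {X : Set (Ordinal.{0} → Ordinal.{0})} (hX : SMZ κ.ord X) :
    ∃ fX ∈ prodSet κ.ord b, ∀ g ∈ prodSet κ.ord b,
      codeFn κ.ord b g ∈ X → eqInfty κ.ord g fX := by
  classical
  set F : ↥(Iio κ.ord) → Ordinal.{0} → Ordinal.{0} := fun β γ =>
    if hγ : γ < κ.ord then
      (b ((c.symm (β, ⟨γ, hγ⟩)) : Ordinal) * ((c.symm (β, ⟨γ, hγ⟩)) : Ordinal)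
        + b ((c.symm (β, ⟨γ, hγ⟩)) : Ordinal)) else 0 with hF
  have hFlt : ∀ β, ∀ γ < κ.ord, F β γ < κ.ord := by
    intro β γ hγ
    rw [hF]; simp only [dif_pos hγ]
    exact flen_lt hκ hb (c.symm (β, ⟨γ, hγ⟩)).2
  choose S hS1 hS2 using fun β => hX (F β) (hFlt β)
  set fX : Ordinal.{0} → Ordinal.{0} := fun ζ =>
    if hζ : ζ < κ.ord then
      decFn b (S (c ⟨ζ, hζ⟩).1 ((c ⟨ζ, hζ⟩).2 : Ordinal)) ζ else 0 with hfX
  refine ⟨fX, ?_, ?_⟩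
  · intro ζ
    constructor
    · intro hζ; rw [hfX]; simp only [dif_pos hζ]; exact dec_lt hb _ hζ
    · intro hζ; rw [hfX]; simp only [dif_neg hζ]
  · intro g hg hcode δ hδ
    have match_ : ∀ β : ↥(Iio κ.ord), ∃ ζ : ↥(Iio κ.ord),
        (c ζ).1 = β ∧ g ζ = fX ζ := by
      intro β
      obtain ⟨α, hα, hagree⟩ := hS2 β _ hcode
      set ζs : ↥(Iio κ.ord) := c.symm (β, ⟨α, hα⟩) with hζs
      refine ⟨ζs, ?_, ?_⟩
      · rw [hζs, Equiv.apply_symm_apply]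
      · have hζlt : (ζs : Ordinal) < κ.ord := ζs.2
        have hFval : F β α = b (ζs : Ordinal) * (ζs : Ordinal) + b (ζs : Ordinal) := by
          rw [hF]; simp only [dif_pos hα]; rfl
        have hag2 : ∀ p < b (ζs : Ordinal) * (ζs : Ordinal) + b (ζs : Ordinal),
            codeFn κ.ord b g p = S β α p := by
          intro p hp; exact hagree p (by rwa [hFval])
        have hdec : decFn b (S β α) (ζs : Ordinal) = g (ζs : Ordinal) :=
          dec_correct hbinc hg hζlt hag2
        have hcζ : c ⟨(ζs : Ordinal), hζlt⟩ = (β, ⟨α, hα⟩) := by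
          have : (⟨(ζs : Ordinal), hζlt⟩ : ↥(Iio κ.ord)) = ζs := rfl
          rw [this, hζs, Equiv.apply_symm_apply]
        rw [hfX]
        simp only [dif_pos hζlt, hcζ]
        exact hdec.symm
    by_contra hcon
    push_neg at hcon
    -- every matching ζ is ≤ δ
    have hbd : ∀ β : ↥(Iio κ.ord), ∀ ζ : ↥(Iio κ.ord),
        (c ζ).1 = β → g ζ = fX ζ → (ζ : Ordinal) ≤ δ := by
      intro β ζ _ hgf
      by_contra hgt
      push_neg at hgt
      exact absurd hgf (hcon ζ hgt ζ.2)
    choose Z hZ1 hZ2 using match_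
    have hδκ : δ + 1 < κ.ord :=
      (Cardinal.isSuccLimit_ord hκ.1.le).succ_lt hδ
    have hι : Function.Injective
        (fun β : ↥(Iio κ.ord) => (⟨(Z β : Ordinal),
          lt_of_le_of_lt (hbd β (Z β) (hZ1 β) (hZ2 β)) (by rw [Ordinal.add_one_eq_succ]; exact Order.lt_succ δ)⟩ :
            ↥(Iio (δ + 1)))) := by
      intro β β' h
      have hval : (Z β : Ordinal) = (Z β' : Ordinal) := by
        simpa [Subtype.ext_iff] using h
      have : Z β = Z β' := Subtype.ext hval
      rw [← hZ1 β, ← hZ1 β', this]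
    have hle : #(↥(Iio κ.ord)) ≤ #(↥(Iio (δ + 1))) := Cardinal.mk_le_of_injective hι
    rw [Ordinal.mk_Iio_ordinal, Ordinal.mk_Iio_ordinal, Cardinal.lift_le,
      Cardinal.card_ord] at hle
    exact absurd hle (not_le.mpr (Cardinal.lt_ord.mp hδκ))

end Key


/-- For every increasing `b : κ → κ` with infinite cardinal values, the
cofinal equality number `b_κ^b(≠^∞)` is at most `cov(SN_κ)`. -/
theorem stmt17 (κ : Cardinal.{0}) (hκ : κ.IsInaccessible)
    (b : Ordinal.{0} → Ordinal.{0}) (hbinc : IncreasingOn κ.ord b)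
    (hb : ∀ α < κ.ord, b α < κ.ord ∧ IsInfCard (b α)) :
    bNeq κ.ord b ≤ covSN κ.ord := by
  classical
  have hℵ : ℵ₀ ≤ κ := hκ.1.le
  -- a pairing equivalence on `Iio κ.ord`
  have hmk : #(↥(Iio κ.ord)) = #(↥(Iio κ.ord) × ↥(Iio κ.ord)) := by
    rw [Cardinal.mk_prod, Cardinal.lift_id,
      Ordinal.mk_Iio_ordinal, Cardinal.card_ord]
    exact (Cardinal.mul_eq_self (by rwa [Cardinal.aleph0_le_lift])).symm
  obtain ⟨c⟩ := Cardinal.eq.mp hmk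
  -- the covering family set is nonempty (singletons are SMZ)
  have hne : Set.Nonempty { cc : Cardinal.{1} |
      ∃ 𝒞 : Set (Set (Ordinal.{0} → Ordinal.{0})),
        (∀ X ∈ 𝒞, X ⊆ twoSet κ.ord ∧ SMZ κ.ord X) ∧
        ⋃₀ 𝒞 = twoSet κ.ord ∧ cc = #𝒞 } := by
    refine ⟨#(↥((fun x => ({x} : Set (Ordinal.{0} → Ordinal.{0}))) '' twoSet κ.ord)),
      (fun x => ({x} : Set (Ordinal.{0} → Ordinal.{0}))) '' twoSet κ.ord, ?_, ?_, rfl⟩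
    · rintro X ⟨x, hx, rfl⟩
      refine ⟨singleton_subset_iff.mpr hx, ?_⟩
      intro f hf
      refine ⟨fun _ ξ => x ξ, ?_, ?_⟩
      · intro α hα ξ hξ
        exact (hx ξ).1 (hξ.trans (hf α hα))
      · intro y hy
        rcases hy with rfl
        exact ⟨0, (Cardinal.isSuccLimit_ord hℵ).pos, fun ξ _ => rfl⟩
    · ext x
      simp
  rw [covSN]
  refine le_csInf hne ?_
  rintro cv ⟨𝒞, h𝒞, hcover, rfl⟩
  choose Ffun hF1 hF2 using fun X : ↥𝒞 => key hκ hbinc hb c (h𝒞 X X.2).2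
  have hmem : #(↥(Set.range Ffun)) ∈ { cc : Cardinal.{1} |
      ∃ W, W ⊆ prodSet κ.ord b ∧
        (∀ g ∈ prodSet κ.ord b, ∃ f ∈ W, eqInfty κ.ord g f) ∧ cc = #↥W } := by
    refine ⟨Set.range Ffun, ?_, ?_, rfl⟩
    · rintro f ⟨X, rfl⟩
      exact hF1 X
    · intro g hg
      have hx : codeFn κ.ord b g ∈ twoSet κ.ord := code_mem_twoSet hκ hb hg
      rw [← hcover] at hx
      obtain ⟨X, hX𝒞, hmemX⟩ := hx
      exact ⟨Ffun ⟨X, hX𝒞⟩, ⟨⟨X, hX𝒞⟩, rfl⟩, hF2 ⟨X, hX𝒞⟩ g hg hmemX⟩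
  calc bNeq κ.ord b ≤ #(↥(Set.range Ffun)) := csInf_le' hmem
    _ ≤ #(↥𝒞) := Cardinal.mk_range_le


end BGBS
end
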